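/- arXiv:1306.4494 — 2 statements merged into one kernel-verified Lean document; each statement's English description precedes it below -/
import Mathlib

section
/- Let E ⊆ ℝⁿ satisfy 0 < H_α(E) < ∞, and suppose there exist constants a > 0 and r_α > 0 such that a·r^α ≤ H_α(E ∩ B_r(x)) for all x ∈ E and all 0 < r < r_α. Then the packing α-measure of E is finite: P^α(E) < ∞. -/
open Metric Set MeasureTheory Filter ENNReal

/-- The quantity `P^s_ε(A)`: the supremum of `Σ (2 r_k)^s` over all packings of `A`,
i.e. collections of pairwise disjoint open balls with centres in `A` and radii
`0 < r_k ≤ ε/2`. -/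
noncomputable def prePackingAux {X : Type*} [MetricSpace X] (s ε : ℝ) (A : Set X) : ℝ≥0∞ :=
  ⨆ (t : Finset (X × ℝ)) (_ : ∀ p ∈ t, p.1 ∈ A ∧ 0 < p.2 ∧ p.2 ≤ ε / 2)
    (_ : (t : Set (X × ℝ)).Pairwise fun p q =>
      Disjoint (Metric.ball p.1 p.2) (Metric.ball q.1 q.2)),
    ∑ p ∈ t, ENNReal.ofReal ((2 * p.2) ^ s)

/-- The packing premeasure `P^s_0(A) = lim_{ε ↓ 0} P^s_ε(A)`; since `ε ↦ P^s_ε(A)` is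
nondecreasing, the limit is the infimum over `ε > 0`. -/
noncomputable def prePacking {X : Type*} [MetricSpace X] (s : ℝ) (A : Set X) : ℝ≥0∞ :=
  ⨅ (ε : ℝ) (_ : 0 < ε), prePackingAux s ε A

/-- The packing `s`-measure `P^s(A) = inf {Σ_i P^s_0(A_i) : A = ∪_i A_i}`. -/
noncomputable def packingMeasure {X : Type*} [MetricSpace X] (s : ℝ) (A : Set X) : ℝ≥0∞ :=
  ⨅ (c : ℕ → Set X) (_ : A ⊆ ⋃ i, c i), ∑' i, prePacking s (c i)

/-!
Balls of radius `r < rα` centred in `E` carry at least `a r^α` of the `α`-Hausdorff mass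
of `E`. The balls of a packing are disjoint, so
`Σ (2 r_k)^α ≤ (2^α / a) Σ H^α(E ∩ B(x_k, r_k)) ≤ (2^α / a) H^α(E)`.
Hence already the packing premeasure of `E` is finite, and `P^α(E) ≤ P^α_0(E)`.
-/

lemma ofReal_two_mul_rpow_le {s c r : ℝ} {m : ℝ≥0∞} (hc : 0 < c) (hr : 0 ≤ r)
    (h : ENNReal.ofReal (c * r ^ s) ≤ m) :
    ENNReal.ofReal ((2 * r) ^ s) ≤ ENNReal.ofReal (2 ^ s / c) * m := by
  have hsplit : (2 * r) ^ s = (2 ^ s / c) * (c * r ^ s) := by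
    rw [Real.mul_rpow zero_le_two hr]
    field_simp
  rw [hsplit, ENNReal.ofReal_mul (by positivity)]
  gcongr

section Packing

variable {X : Type*} [MetricSpace X]

lemma prePacking_empty (s : ℝ) : prePacking s (∅ : Set X) = 0 := by
  refine le_antisymm (le_trans (iInf₂_le 1 one_pos) ?_) zero_le
  refine iSup_le fun t => iSup_le fun ht => iSup_le fun _ => ?_
  have : t = ∅ := Finset.eq_empty_of_forall_notMem fun p hp => (ht p hp).1
  simp [this]

lemma packingMeasure_le_prePacking (s : ℝ) (A : Set X) :
    packingMeasure s A ≤ prePacking s A := by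
  refine le_trans (iInf₂_le (fun i => if i = 0 then A else ∅) ?_) ?_
  · intro x hx
    exact mem_iUnion.2 ⟨0, by simpa using hx⟩
  · rw [tsum_eq_single 0 fun i hi => by simp [hi, prePacking_empty]]
    simp

lemma prePacking_le_prePackingAux (s : ℝ) (A : Set X) {ε : ℝ} (hε : 0 < ε) :
    prePacking s A ≤ prePackingAux s ε A :=
  iInf₂_le ε hε

variable [MeasurableSpace X] [OpensMeasurableSpace X]

lemma sum_measure_inter_ball_le (μ : Measure X) (A : Set X) (t : Finset (X × ℝ))
    (hdisj : (t : Set (X × ℝ)).Pairwise fun p q => Disjoint (ball p.1 p.2) (ball q.1 q.2)) :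
    ∑ p ∈ t, μ (A ∩ ball p.1 p.2) ≤ μ A := by
  calc ∑ p ∈ t, μ (A ∩ ball p.1 p.2)
      = ∑ p ∈ t, μ.restrict A (ball p.1 p.2) := by
        simp only [Measure.restrict_apply measurableSet_ball, inter_comm]
    _ = μ.restrict A (⋃ p ∈ t, ball p.1 p.2) :=
        (measure_biUnion_finset hdisj fun p _ => measurableSet_ball).symm
    _ ≤ μ.restrict A univ := measure_mono (subset_univ _)
    _ = μ A := Measure.restrict_apply_univ A

lemma prePackingAux_le_of_lower_regular {μ : Measure X} {A : Set X} {s c R ε : ℝ}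
    (hc : 0 < c) (hε : ε < 2 * R)
    (hreg : ∀ x ∈ A, ∀ r : ℝ, 0 < r → r < R →
      ENNReal.ofReal (c * r ^ s) ≤ μ (A ∩ ball x r)) :
    prePackingAux s ε A ≤ ENNReal.ofReal (2 ^ s / c) * μ A := by
  refine iSup_le fun t => iSup_le fun ht => iSup_le fun hdisj => ?_
  have hball : ∀ p ∈ t, ENNReal.ofReal ((2 * p.2) ^ s) ≤
      ENNReal.ofReal (2 ^ s / c) * μ (A ∩ ball p.1 p.2) := by
    intro p hp
    obtain ⟨hpA, hr0, hrε⟩ := ht p hp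
    exact ofReal_two_mul_rpow_le hc hr0.le (hreg p.1 hpA p.2 hr0 (by linarith))
  calc ∑ p ∈ t, ENNReal.ofReal ((2 * p.2) ^ s)
      ≤ ∑ p ∈ t, ENNReal.ofReal (2 ^ s / c) * μ (A ∩ ball p.1 p.2) :=
        Finset.sum_le_sum hball
    _ = ENNReal.ofReal (2 ^ s / c) * ∑ p ∈ t, μ (A ∩ ball p.1 p.2) := by rw [Finset.mul_sum]
    _ ≤ ENNReal.ofReal (2 ^ s / c) * μ A := by
        gcongr
        exact sum_measure_inter_ball_le μ A t hdisj

end Packing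

theorem packingMeasure_lt_top_of_lower_regular_general (n : ℕ) (α : ℝ)
    (E : Set (EuclideanSpace ℝ (Fin n)))
    (hEfin : μH[α] E < ⊤)
    (a rα : ℝ) (ha : 0 < a) (hrα : 0 < rα)
    (hreg : ∀ x ∈ E, ∀ r : ℝ, 0 < r → r < rα →
      ENNReal.ofReal (a * r ^ α) ≤ μH[α] (E ∩ Metric.ball x r)) :
    packingMeasure α E < ⊤ :=
  calc packingMeasure α E ≤ prePacking α E := packingMeasure_le_prePacking α E
    _ ≤ prePackingAux α rα E := prePacking_le_prePackingAux α E hrα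
    _ ≤ ENNReal.ofReal (2 ^ α / a) * μH[α] E :=
        prePackingAux_le_of_lower_regular ha (by linarith) hreg
    _ < ⊤ := ENNReal.mul_lt_top ofReal_lt_top hEfin

theorem packingMeasure_lt_top_of_lower_regular (n : ℕ) (α : ℝ) (hα : 0 ≤ α)
    (E : Set (EuclideanSpace ℝ (Fin n)))
    (hE0 : 0 < μH[α] E) (hEfin : μH[α] E < ⊤)
    (a rα : ℝ) (ha : 0 < a) (hrα : 0 < rα)
    (hreg : ∀ x ∈ E, ∀ r : ℝ, 0 < r → r < rα →
      ENNReal.ofReal (a * r ^ α) ≤ μH[α] (E ∩ Metric.ball x r)) :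
    packingMeasure α E < ⊤ :=
  packingMeasure_lt_top_of_lower_regular_general n α E hEfin a rα ha hrα hreg
end

section
/- With K, M, α = nβ as in the Salem-set construction, there exists a constant c > 0 such that H_α(M ∩ B_r(x)) ≥ c·r^α for every x ∈ M and every 0 < r < 1. -/
open Metric Set MeasureTheory Filter ENNReal

/-- The product `η₁ η₂ ⋯ η_j` of the first `j` contraction ratios. -/
noncomputable def ratioProd (ηs : ℕ → ℝ) (j : ℕ) : ℝ :=
  ∏ m ∈ Finset.range j, ηs (m + 1)

/-- The `j`-th stage `K_j` of the Salem-type Cantor construction: the union of the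
`N^j` intervals `[∑ a_{w i} η₁⋯η_i , ∑ a_{w i} η₁⋯η_i + η₁⋯η_j]` over all words
`w : Fin j → Fin N`. -/
noncomputable def salemStage (N : ℕ) (a : Fin N → ℝ) (ηs : ℕ → ℝ) (j : ℕ) : Set ℝ :=
  {x | ∃ w : Fin j → Fin N,
    x ∈ Set.Icc (∑ i : Fin j, a (w i) * ratioProd ηs (i : ℕ))
      ((∑ i : Fin j, a (w i) * ratioProd ηs (i : ℕ)) + ratioProd ηs j)}

/-- The Salem-type Cantor set `K = ⋂_j K_j`. -/
noncomputable def salemSet (N : ℕ) (a : Fin N → ℝ) (ηs : ℕ → ℝ) : Set ℝ :=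
  ⋂ j, salemStage N a ηs j

/-- The `n`-fold cartesian product `M = K × ⋯ × K ⊆ ℝⁿ`. -/
noncomputable def salemCube (n N : ℕ) (a : Fin N → ℝ) (ηs : ℕ → ℝ) :
    Set (EuclideanSpace ℝ (Fin n)) :=
  {x | ∀ i, x i ∈ salemSet N a ηs}

/-!
Let `P j = η₁ ⋯ η_j`. The natural measure `μ` on `K` is the image of the uniform product measure
on addresses `ω : ℕ → Fin N` under `ω ↦ ∑ a (ω i) P i`; it gives every stage-`j` interval mass
`N⁻ʲ = (ηʲ)^β`. As `ηʲ / 2 ≤ P j ≤ ηʲ`, a ball of radius `ρ ∈ (P (j+1), P j]` centred in `K`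
contains a stage-`(j+1)` interval, so `μ (B(t, ρ)) ≥ (ηρ)^β`; and since the left endpoints of the
stage-`(j+1)` intervals are `η P j`-separated, it meets at most `3/η + 1` of them, so
`μ (B(t, ρ)) ≤ C ρ^β`. Hence the `n`-fold product of `μ` on `ℝⁿ` is carried by `M`, gives mass
`≳ r^α` to balls centred in `M` and mass `≲ ρ^α` to every ball, and the mass distribution
principle turns this into the lower bound for `H_α`.
-/

open ProbabilityTheory Topology

lemma card_le_div_add_one_of_separated {ι : Type*} (S : Finset ι) (f : ι → ℝ) {δ A B : ℝ}
    (hδ : 0 < δ) (hAB : A ≤ B) (hmem : ∀ i ∈ S, f i ∈ Icc A B)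
    (hsep : ∀ i ∈ S, ∀ i' ∈ S, i ≠ i' → δ ≤ |f i - f i'|) :
    (S.card : ℝ) ≤ (B - A) / δ + 1 := by
  set g : ι → ℤ := fun i => ⌊(f i - A) / δ⌋
  have hinj : Set.InjOn g S := fun i hi i' hi' hgi => by
    by_contra hne
    have h1 := Int.abs_sub_lt_one_of_floor_eq_floor hgi
    rw [← sub_div, sub_sub_sub_cancel_right, abs_div, abs_of_pos hδ, div_lt_one hδ] at h1
    exact (hsep i hi i' hi' hne).not_gt h1
  have hfloor0 : (0 : ℤ) ≤ ⌊(B - A) / δ⌋ := Int.floor_nonneg.2 (div_nonneg (by linarith) hδ.le)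
  have himg : S.image g ⊆ Finset.Icc 0 ⌊(B - A) / δ⌋ := by
    simp only [Finset.subset_iff, Finset.mem_image, Finset.mem_Icc]
    rintro _ ⟨i, hi, rfl⟩
    obtain ⟨hA, hB⟩ := hmem i hi
    exact ⟨Int.floor_nonneg.2 (div_nonneg (by linarith) hδ.le),
      Int.floor_le_floor (by gcongr)⟩
  have hcard : S.card ≤ (⌊(B - A) / δ⌋ + 1).toNat := by
    simpa [Finset.card_image_of_injOn hinj] using Finset.card_le_card himg
  calc (S.card : ℝ) ≤ ((⌊(B - A) / δ⌋ + 1).toNat : ℤ) := by exact_mod_cast hcard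
    _ = ⌊(B - A) / δ⌋ + 1 := by rw [Int.toNat_of_nonneg (by omega)]; push_cast; ring
    _ ≤ (B - A) / δ + 1 := by linarith [Int.floor_le ((B - A) / δ)]

/-- The geometric decay `P (m + 1) ≤ η P m` makes the later terms of a digit expansion too small
to compensate a discrepancy at position `k`. -/
lemma one_sub_mul_sum_add_mul_le {η : ℝ} {P : ℕ → ℝ} (hP : ∀ m, P (m + 1) ≤ η * P m) (k l : ℕ) :
    (1 - η) * ∑ i ∈ Finset.range l, P (k + 1 + i) + η * P (k + l) ≤ η * P k := by
  induction l with
  | zero => simp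
  | succ l ih =>
    rw [Finset.sum_range_succ, show k + 1 + l = k + l + 1 by omega, ← add_assoc]
    linarith [hP (k + l)]

/-- Mass distribution principle. -/
theorem MeasureTheory.Measure.le_ofReal_mul_hausdorffMeasure {X : Type*} [MetricSpace X]
    [MeasurableSpace X] [BorelSpace X] (ν : Measure X) {C d ρ₀ : ℝ} (hC : 0 < C) (hd : 0 ≤ d)
    (hρ₀ : 0 < ρ₀)
    (hball : ∀ x ρ, 0 < ρ → ρ ≤ ρ₀ → ν (closedBall x ρ) ≤ ENNReal.ofReal (C * ρ ^ d))
    (s : Set X) : ν s ≤ ENNReal.ofReal C * μH[d] s := by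
  have hC' : ENNReal.ofReal C ≠ 0 := by simpa using hC
  have hsmall : ∀ s : Set X, ediam s ≤ ENNReal.ofReal (ρ₀ / 2) →
      ν s ≤ ENNReal.ofReal C * ediam s ^ d := by
    intro s hs
    rcases s.eq_empty_or_nonempty with rfl | ⟨x, hx⟩
    · simp
    have hne : ediam s ≠ ⊤ := ne_top_of_le_ne_top ofReal_ne_top hs
    have hD : diam s < ρ₀ := by
      have := ENNReal.toReal_mono ofReal_ne_top hs
      rw [ENNReal.toReal_ofReal (by positivity)] at this
      exact this.trans_lt (by linarith)
    -- `s` lies in every closed ball `closedBall x ρ` with `ρ > diam s`; let `ρ ↓ diam s`.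
    have hlim : Tendsto (fun ρ => ENNReal.ofReal (C * ρ ^ d)) (𝓝[>] diam s)
        (𝓝 (ENNReal.ofReal (C * diam s ^ d))) :=
      ((ENNReal.continuous_ofReal.tendsto _).comp
        (((Real.continuousAt_rpow_const _ _ (Or.inr hd)).tendsto).const_mul C)).mono_left
        nhdsWithin_le_nhds
    have hνs : ν s ≤ ENNReal.ofReal (C * diam s ^ d) := by
      refine ge_of_tendsto hlim ?_
      filter_upwards [Ioo_mem_nhdsGT hD] with ρ hρ
      refine (measure_mono fun y hy => ?_).trans
        (hball x ρ (diam_nonneg.trans_lt hρ.1) hρ.2.le)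
      exact mem_closedBall.2 ((dist_le_diam_of_mem (isBounded_iff_ediam_ne_top.2 hne) hy hx).trans
        hρ.1.le)
    rwa [ENNReal.ofReal_mul hC.le, ← ENNReal.ofReal_rpow_of_nonneg diam_nonneg hd, diam,
      ENNReal.ofReal_toReal hne] at hνs
  have hle : (ENNReal.ofReal C)⁻¹ • ν ≤ μH[d] :=
    Measure.le_hausdorffMeasure d _ (ENNReal.ofReal (ρ₀ / 2)) (by simpa using hρ₀) fun s hs => by
      rw [Measure.smul_apply, smul_eq_mul, ENNReal.inv_mul_le_iff hC' ofReal_ne_top]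
      exact hsmall s hs
  calc ν s = ENNReal.ofReal C * ((ENNReal.ofReal C)⁻¹ * ν s) := by
        rw [← mul_assoc, ENNReal.mul_inv_cancel hC' ofReal_ne_top, one_mul]
    _ ≤ ENNReal.ofReal C * μH[d] s := by
        gcongr
        simpa using hle s

lemma prod_ofReal_mul_rpow {ι : Type*} [Fintype ι] {C ρ β : ℝ} (hC : 0 ≤ C) (hρ : 0 ≤ ρ) :
    ∏ _i : ι, ENNReal.ofReal (C * ρ ^ β) =
      ENNReal.ofReal (C ^ Fintype.card ι * ρ ^ (Fintype.card ι * β)) := by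
  rw [Finset.prod_const, Finset.card_univ, ← ENNReal.ofReal_pow (by positivity), mul_pow,
    ← Real.rpow_natCast (ρ ^ β), ← Real.rpow_mul hρ, mul_comm β]

section EuclideanPi

variable {ι : Type*} [Fintype ι]

noncomputable def euclideanPi (μ : Measure ℝ) : Measure (EuclideanSpace ℝ ι) :=
  (Measure.pi fun _ : ι => μ).map (MeasurableEquiv.toLp 2 (ι → ℝ))

variable {μ : Measure ℝ}

lemma euclideanPi_apply (s : Set (EuclideanSpace ℝ ι)) :
    euclideanPi μ s = Measure.pi (fun _ : ι => μ) (WithLp.toLp 2 ⁻¹' s) :=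
  MeasurableEquiv.map_apply _ _

lemma euclideanPi_closedBall_le [SigmaFinite μ] (x : EuclideanSpace ℝ ι) (ρ : ℝ) :
    euclideanPi μ (closedBall x ρ) ≤ ∏ i, μ (closedBall (x i) ρ) := by
  rw [euclideanPi_apply, ← Measure.pi_pi]
  exact measure_mono fun p hp i _ => (PiLp.dist_apply_le (WithLp.toLp 2 p) x i).trans hp

lemma prod_le_euclideanPi_ball [SigmaFinite μ] (x : EuclideanSpace ℝ ι) {r : ℝ} (hr : 0 < r) :
    ∏ i, μ (ball (x i) (r / √(Fintype.card ι))) ≤ euclideanPi μ (ball x r) := by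
  rw [euclideanPi_apply, ← Measure.pi_pi]
  refine measure_mono fun p hp => ?_
  rw [mem_univ_pi] at hp
  rw [mem_preimage, mem_ball, EuclideanSpace.dist_eq]
  rcases isEmpty_or_nonempty ι with hι | hι
  · simpa using hr
  have hcard : (0 : ℝ) < Fintype.card ι := by exact_mod_cast Fintype.card_pos
  calc √(∑ i, dist (p i) (x i) ^ 2) < √(∑ _i : ι, (r / √(Fintype.card ι)) ^ 2) :=
        Real.sqrt_lt_sqrt (by positivity) (Finset.sum_lt_sum_of_nonempty Finset.univ_nonempty
          fun i _ => pow_lt_pow_left₀ (hp i) dist_nonneg two_ne_zero)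
    _ = r := by
        rw [Finset.sum_const, Finset.card_univ, div_pow, Real.sq_sqrt hcard.le, nsmul_eq_mul,
          mul_div_cancel₀ _ hcard.ne', Real.sqrt_sq hr.le]

lemma euclideanPi_compl_pi_null [SigmaFinite μ] {K : Set ℝ} (hK : μ Kᶜ = 0) :
    euclideanPi μ {x : EuclideanSpace ℝ ι | ∀ i, x i ∈ K}ᶜ = 0 := by
  have : WithLp.toLp 2 ⁻¹' {x : EuclideanSpace ℝ ι | ∀ i, x i ∈ K}ᶜ =
      ⋃ i, Function.eval i ⁻¹' Kᶜ := by
    ext p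
    simp
  rw [euclideanPi_apply, this]
  exact measure_iUnion_null fun i => Measure.pi_eval_preimage_null _ hK

lemma euclideanPi_closedBall_le_ofReal [SigmaFinite μ] {C β ρ : ℝ} (hC : 0 ≤ C) (hρ : 0 ≤ ρ)
    (h : ∀ t, μ (closedBall t ρ) ≤ ENNReal.ofReal (C * ρ ^ β)) (x : EuclideanSpace ℝ ι) :
    euclideanPi μ (closedBall x ρ) ≤
      ENNReal.ofReal (C ^ Fintype.card ι * ρ ^ (Fintype.card ι * β)) :=
  (euclideanPi_closedBall_le x ρ).trans
    ((Finset.prod_le_prod' fun i _ => h (x i)).trans_eq (prod_ofReal_mul_rpow hC hρ))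

lemma ofReal_le_euclideanPi_ball [SigmaFinite μ] {K : Set ℝ} {c β ρ₁ : ℝ} (hc : 0 ≤ c)
    (h : ∀ t ∈ K, ∀ ρ, 0 < ρ → ρ ≤ ρ₁ → ENNReal.ofReal (c * ρ ^ β) ≤ μ (ball t ρ))
    {x : EuclideanSpace ℝ ι} (hx : ∀ i, x i ∈ K) {r : ℝ} (hr0 : 0 < r) (hr1 : r ≤ ρ₁) :
    ENNReal.ofReal (c ^ Fintype.card ι * (r / √(Fintype.card ι)) ^ (Fintype.card ι * β)) ≤
      euclideanPi μ (ball x r) := by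
  rw [← prod_ofReal_mul_rpow hc (by positivity)]
  refine (Finset.prod_le_prod' fun i _ => ?_).trans (prod_le_euclideanPi_ball x hr0)
  have hcard : (1 : ℝ) ≤ √(Fintype.card ι) :=
    Real.one_le_sqrt.2 (by exact_mod_cast Fintype.card_pos_iff.2 ⟨i⟩)
  exact h _ (hx i) _ (by positivity) ((div_le_self hr0.le hcard).trans hr1)

theorem exists_ofReal_mul_rpow_le_hausdorffMeasure_inter_ball [Nonempty ι] [SigmaFinite μ]
    {K : Set ℝ} {c C β : ℝ} (hc : 0 < c) (hC : 0 < C) (hβ : 0 ≤ β) (hK : μ Kᶜ = 0)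
    (hlower : ∀ t ∈ K, ∀ ρ, 0 < ρ → ρ ≤ 1 → ENNReal.ofReal (c * ρ ^ β) ≤ μ (ball t ρ))
    (hupper : ∀ t ρ, 0 < ρ → ρ ≤ 1 → μ (closedBall t ρ) ≤ ENNReal.ofReal (C * ρ ^ β)) :
    ∃ c' : ℝ, 0 < c' ∧ ∀ x : EuclideanSpace ℝ ι, (∀ i, x i ∈ K) → ∀ r, 0 < r → r ≤ 1 →
      ENNReal.ofReal (c' * r ^ (Fintype.card ι * β)) ≤
        μH[Fintype.card ι * β] ({y : EuclideanSpace ℝ ι | ∀ i, y i ∈ K} ∩ ball x r) := by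
  set n := Fintype.card ι
  have hfrostman : ∀ s, euclideanPi μ s ≤ ENNReal.ofReal (C ^ n) * μH[n * β] s :=
    (euclideanPi μ).le_ofReal_mul_hausdorffMeasure (pow_pos hC n) (by positivity) one_pos
      fun x ρ hρ0 hρ1 => euclideanPi_closedBall_le_ofReal hC.le hρ0.le
        (fun t => hupper t ρ hρ0 hρ1) x
  set c' := c ^ n * (1 / √n) ^ (n * β)
  have hc' : 0 < c' := by
    have : (0 : ℝ) < n := by exact_mod_cast Fintype.card_pos
    positivity
  refine ⟨c' / C ^ n, by positivity, fun x hx r hr0 hr1 => ?_⟩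
  have hball : ENNReal.ofReal (c' * r ^ (n * β)) ≤ euclideanPi μ (ball x r) := by
    convert ofReal_le_euclideanPi_ball hc.le hlower hx hr0 hr1 using 2
    rw [div_eq_mul_one_div r, Real.mul_rpow hr0.le (by positivity)]
    ring
  rw [div_mul_eq_mul_div, ENNReal.ofReal_div_of_pos (pow_pos hC n)]
  refine ENNReal.div_le_of_le_mul ?_
  calc ENNReal.ofReal (c' * r ^ (n * β)) ≤ euclideanPi μ (ball x r) := hball
    _ = euclideanPi μ ({y | ∀ i, y i ∈ K} ∩ ball x r) := by
        rw [inter_comm, measure_inter_conull (euclideanPi_compl_pi_null hK)]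
    _ ≤ _ := by rw [mul_comm]; exact hfrostman _

end EuclideanPi

namespace SalemSet

variable {N : ℕ} {a : Fin N → ℝ} {ηs : ℕ → ℝ} {η : ℝ}

section RatioProd

@[simp] lemma ratioProd_zero : ratioProd ηs 0 = 1 := Finset.prod_range_zero _

lemma ratioProd_pos (hpos : ∀ j, 0 < ηs j) (j : ℕ) : 0 < ratioProd ηs j :=
  Finset.prod_pos fun m _ => hpos (m + 1)

lemma ratioProd_add_le (hpos : ∀ j, 0 < ηs j) (hle : ∀ j, ηs j ≤ η) (j i : ℕ) :
    ratioProd ηs (j + i) ≤ ratioProd ηs j * η ^ i := by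
  rw [ratioProd, Finset.prod_range_add]
  refine mul_le_mul_of_nonneg_left ?_ (ratioProd_pos hpos j).le
  calc ∏ m ∈ Finset.range i, ηs (j + m + 1) ≤ ∏ _m ∈ Finset.range i, η :=
        Finset.prod_le_prod (fun m _ => (hpos _).le) fun m _ => hle _
    _ = η ^ i := by rw [Finset.prod_const, Finset.card_range]

lemma ratioProd_le_pow (hpos : ∀ j, 0 < ηs j) (hle : ∀ j, ηs j ≤ η) (j : ℕ) :
    ratioProd ηs j ≤ η ^ j := by
  simpa using ratioProd_add_le hpos hle 0 j

lemma ratioProd_succ_le (hpos : ∀ j, 0 < ηs j) (hle : ∀ j, ηs j ≤ η) (j : ℕ) :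
    ratioProd ηs (j + 1) ≤ η * ratioProd ηs j := by
  simpa [mul_comm] using ratioProd_add_le hpos hle j 1

lemma prod_range_one_sub_inv_sq (j : ℕ) :
    ∏ m ∈ Finset.range j, (1 - 1 / ((m : ℝ) + 2) ^ 2) = ((j : ℝ) + 2) / (2 * ((j : ℝ) + 1)) := by
  induction j with
  | zero => norm_num
  | succ j ih =>
    rw [Finset.prod_range_succ, ih]
    push_cast
    field_simp
    ring

lemma pow_div_two_le_ratioProd (hη : 0 < η)
    (hlb : ∀ j : ℕ, η * (1 - 1 / ((j : ℝ) + 1) ^ 2) ≤ ηs j) (j : ℕ) :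
    η ^ j / 2 ≤ ratioProd ηs j := by
  have hfactor : ∀ m : ℕ, 0 ≤ η * (1 - 1 / ((m : ℝ) + 2) ^ 2) := fun m => by
    have hm : (1 : ℝ) ≤ ((m : ℝ) + 2) ^ 2 := by nlinarith [(m.cast_nonneg : (0 : ℝ) ≤ m)]
    have : 1 / ((m : ℝ) + 2) ^ 2 ≤ 1 := div_le_one_of_le₀ hm (by positivity)
    nlinarith
  have hhalf : (1 : ℝ) / 2 ≤ ((j : ℝ) + 2) / (2 * ((j : ℝ) + 1)) := by
    rw [div_le_div_iff₀ (by norm_num) (by positivity)]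
    linarith
  calc η ^ j / 2 ≤ η ^ j * (((j : ℝ) + 2) / (2 * ((j : ℝ) + 1))) := by
        rw [div_eq_mul_one_div]; gcongr
    _ = ∏ m ∈ Finset.range j, η * (1 - 1 / ((m : ℝ) + 2) ^ 2) := by
        rw [Finset.prod_mul_distrib, Finset.prod_const, Finset.card_range,
          prod_range_one_sub_inv_sq]
    _ ≤ ratioProd ηs j := Finset.prod_le_prod (fun m _ => hfactor m) fun m _ => by
        simpa [add_assoc, one_add_one_eq_two] using hlb (m + 1)

lemma exists_ratioProd_succ_lt_le (hpos : ∀ j, 0 < ηs j) (hle : ∀ j, ηs j ≤ η) (hη1 : η < 1)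
    {ρ : ℝ} (hρ0 : 0 < ρ) (hρ1 : ρ ≤ 1) :
    ∃ j, ratioProd ηs (j + 1) < ρ ∧ ρ ≤ ratioProd ηs j := by
  classical
  have hex : ∃ m, ratioProd ηs m < ρ := by
    have hη0 : 0 ≤ η := (hpos 0).le.trans (hle 0)
    obtain ⟨m, hm⟩ := exists_pow_lt_of_lt_one hρ0 hη1
    exact ⟨m, (ratioProd_le_pow hpos hle m).trans_lt hm⟩
  obtain ⟨j, hj⟩ : ∃ j, Nat.find hex = j + 1 :=
    Nat.exists_eq_succ_of_ne_zero fun h0 => by simpa [h0, hρ1.not_gt] using Nat.find_spec hex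
  refine ⟨j, hj ▸ Nat.find_spec hex, ?_⟩
  simpa using Nat.find_min hex (hj ▸ Nat.lt_succ_self j : j < Nat.find hex)

end RatioProd

structure IsSalemData (N : ℕ) (a : Fin N → ℝ) (ηs : ℕ → ℝ) (η : ℝ) : Prop where
  ratio_pos : ∀ j, 0 < ηs j
  ratio_le : ∀ j, ηs j ≤ η
  lt_one : η < 1
  digit_nonneg : ∀ k, 0 ≤ a k
  digit_le : ∀ k, a k ≤ 1 - η
  digit_sep : ∀ k l, k ≠ l → η < |a k - a l|

noncomputable def leftEnd (a : Fin N → ℝ) (ηs : ℕ → ℝ) {j : ℕ} (w : Fin j → Fin N) : ℝ :=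
  ∑ i : Fin j, a (w i) * ratioProd ηs i

lemma leftEnd_prefix (ω : ℕ → Fin N) (j : ℕ) :
    leftEnd a ηs (fun i : Fin j => ω i) = ∑ i ∈ Finset.range j, a (ω i) * ratioProd ηs i :=
  Fin.sum_univ_eq_sum_range (fun i => a (ω i) * ratioProd ηs i) j

def stageInterval (a : Fin N → ℝ) (ηs : ℕ → ℝ) {j : ℕ} (w : Fin j → Fin N) : Set ℝ :=
  Icc (leftEnd a ηs w) (leftEnd a ηs w + ratioProd ηs j)

lemma mem_salemStage_iff {x : ℝ} {j : ℕ} :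
    x ∈ salemStage N a ηs j ↔ ∃ w : Fin j → Fin N, x ∈ stageInterval a ηs w :=
  Iff.rfl

lemma isClosed_salemSet : IsClosed (salemSet N a ηs) := by
  refine isClosed_iInter fun j => ?_
  have : salemStage N a ηs j = ⋃ w : Fin j → Fin N, stageInterval a ηs w := by
    ext x; simp [mem_salemStage_iff]
  rw [this]
  exact isClosed_iUnion_of_finite fun w => isClosed_Icc

noncomputable def coding (a : Fin N → ℝ) (ηs : ℕ → ℝ) (ω : ℕ → Fin N) : ℝ :=
  ∑' i, a (ω i) * ratioProd ηs i

namespace IsSalemData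

lemma pos (h : IsSalemData N a ηs η) : 0 < η := (h.ratio_pos 0).trans_le (h.ratio_le 0)

lemma ratioProd_pos (h : IsSalemData N a ηs η) (j : ℕ) : 0 < ratioProd ηs j :=
  SalemSet.ratioProd_pos h.ratio_pos j

lemma coding_term_le (h : IsSalemData N a ηs η) (ω : ℕ → Fin N) (j i : ℕ) :
    a (ω (i + j)) * ratioProd ηs (i + j) ≤ (1 - η) * ratioProd ηs j * η ^ i := by
  rw [mul_assoc, add_comm i j]
  exact mul_le_mul (h.digit_le _) (ratioProd_add_le h.ratio_pos h.ratio_le j i)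
    (h.ratioProd_pos _).le (by linarith [h.lt_one])

lemma summable_coding_tail (h : IsSalemData N a ηs η) (ω : ℕ → Fin N) (j : ℕ) :
    Summable fun i => a (ω (i + j)) * ratioProd ηs (i + j) :=
  .of_nonneg_of_le (fun _ => mul_nonneg (h.digit_nonneg _) (h.ratioProd_pos _).le)
    (h.coding_term_le ω j) ((summable_geometric_of_lt_one h.pos.le h.lt_one).mul_left _)

lemma coding_tail_le (h : IsSalemData N a ηs η) (ω : ℕ → Fin N) (j : ℕ) :
    ∑' i, a (ω (i + j)) * ratioProd ηs (i + j) ≤ ratioProd ηs j := by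
  calc ∑' i, a (ω (i + j)) * ratioProd ηs (i + j)
      ≤ ∑' i, (1 - η) * ratioProd ηs j * η ^ i :=
        (h.summable_coding_tail ω j).tsum_le_tsum (h.coding_term_le ω j)
          ((summable_geometric_of_lt_one h.pos.le h.lt_one).mul_left _)
    _ = ratioProd ηs j := by
        rw [tsum_mul_left, tsum_geometric_of_lt_one h.pos.le h.lt_one]
        field_simp [(sub_pos.2 h.lt_one).ne']

lemma coding_mem_stageInterval (h : IsSalemData N a ηs η) (ω : ℕ → Fin N) (j : ℕ) :
    coding a ηs ω ∈ stageInterval a ηs (fun i : Fin j => ω i) := by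
  have hsplit := (h.summable_coding_tail ω 0).sum_add_tsum_nat_add j
  have htail := h.coding_tail_le ω j
  have htail0 : 0 ≤ ∑' i, a (ω (i + j)) * ratioProd ηs (i + j) :=
    tsum_nonneg fun i => mul_nonneg (h.digit_nonneg _) (h.ratioProd_pos _).le
  simp only [add_zero] at hsplit
  rw [stageInterval, leftEnd_prefix, coding, ← hsplit]
  constructor <;> linarith

lemma coding_mem_salemSet (h : IsSalemData N a ηs η) (ω : ℕ → Fin N) :
    coding a ηs ω ∈ salemSet N a ηs :=
  mem_iInter.2 fun j => ⟨_, h.coding_mem_stageInterval ω j⟩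

lemma continuous_coding (h : IsSalemData N a ηs η) : Continuous (coding a ηs) := by
  refine continuous_tsum (fun i => (continuous_of_discreteTopology.comp (continuous_apply i)).mul
    continuous_const) ((summable_geometric_of_lt_one h.pos.le h.lt_one).mul_left (1 - η))
    fun i ω => ?_
  have := h.coding_term_le ω 0 i
  simp only [add_zero, ratioProd_zero, mul_one] at this
  rw [Real.norm_of_nonneg (mul_nonneg (h.digit_nonneg _) (h.ratioProd_pos _).le)]
  exact this

end IsSalemData

namespace IsSalemData

lemma le_abs_sum_sub (h : IsSalemData N a ηs η) {u v : ℕ → Fin N} {k : ℕ}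
    (hagree : ∀ i < k, u i = v i) (hk : u k ≠ v k) (l : ℕ) :
    η * ratioProd ηs (k + l) ≤
      |∑ i ∈ Finset.range (k + l + 1), (a (u i) - a (v i)) * ratioProd ηs i| := by
  set d : ℕ → ℝ := fun i => (a (u i) - a (v i)) * ratioProd ηs i
  have hhead : ∑ i ∈ Finset.range k, d i = 0 :=
    Finset.sum_eq_zero fun i hi => by simp [d, hagree i (Finset.mem_range.1 hi)]
  have hdk : η * ratioProd ηs k ≤ |d k| := by
    rw [abs_mul, abs_of_pos (h.ratioProd_pos k)]
    exact mul_le_mul_of_nonneg_right (h.digit_sep _ _ hk).le (h.ratioProd_pos k).le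
  have htail : |∑ i ∈ Finset.range l, d (k + 1 + i)| ≤
      (1 - η) * ∑ i ∈ Finset.range l, ratioProd ηs (k + 1 + i) := by
    rw [Finset.mul_sum]
    refine (Finset.abs_sum_le_sum_abs _ _).trans (Finset.sum_le_sum fun i _ => ?_)
    rw [abs_mul, abs_of_pos (h.ratioProd_pos _)]
    refine mul_le_mul_of_nonneg_right ?_ (h.ratioProd_pos _).le
    have := h.digit_le (u (k + 1 + i)); have := h.digit_nonneg (v (k + 1 + i))
    have := h.digit_le (v (k + 1 + i)); have := h.digit_nonneg (u (k + 1 + i))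
    exact abs_sub_le_iff.2 ⟨by linarith, by linarith⟩
  have hdecay := one_sub_mul_sum_add_mul_le (ratioProd_succ_le h.ratio_pos h.ratio_le) k l
  rw [show k + l + 1 = k + 1 + l by omega, Finset.sum_range_add, Finset.sum_range_succ, hhead,
    zero_add]
  linarith [abs_sub_abs_le_abs_add (d k) (∑ i ∈ Finset.range l, d (k + 1 + i))]

lemma le_abs_leftEnd_sub (h : IsSalemData N a ηs η) {j : ℕ} {w w' : Fin (j + 1) → Fin N}
    (hne : w ≠ w') : η * ratioProd ηs j ≤ |leftEnd a ηs w - leftEnd a ηs w'| := by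
  classical
  let extend (v : Fin (j + 1) → Fin N) (i : ℕ) : Fin N := if hi : i < j + 1 then v ⟨i, hi⟩ else w 0
  have hprefix : ∀ v, (fun i : Fin (j + 1) => extend v i) = v := fun v => by
    ext i; simp [extend, Fin.is_le i]
  have hex : ∃ i, extend w i ≠ extend w' i := by
    obtain ⟨i, hi⟩ := Function.ne_iff.1 hne
    exact ⟨i, by simpa [extend, Fin.is_le i] using hi⟩
  set k := Nat.find hex
  have hkj : k ≤ j := by
    by_contra! hjk
    have hout : ¬ Nat.find hex < j + 1 := by omega
    exact Nat.find_spec hex (by simp only [extend, dif_neg hout])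
  have hsum := h.le_abs_sum_sub (fun i hi => not_not.1 (Nat.find_min hex hi))
    (Nat.find_spec hex) (j - k)
  rw [Nat.add_sub_cancel' hkj] at hsum
  rwa [← hprefix w, ← hprefix w', leftEnd_prefix, leftEnd_prefix, ← Finset.sum_sub_distrib,
    Finset.sum_congr rfl fun i _ => (sub_mul _ _ _).symm]

end IsSalemData

variable (N) in
noncomputable def addressMeasure : Measure (ℕ → Fin N) :=
  Measure.infinitePi fun _ => uniformOn univ

lemma addressMeasure_prefix [NeZero N] {j : ℕ} (w : Fin j → Fin N) :
    addressMeasure N {ω | ∀ i : Fin j, ω i = w i} = ((N : ℝ≥0∞) ^ j)⁻¹ := by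
  classical
  have hcyl : {ω : ℕ → Fin N | ∀ i : Fin j, ω i = w i} =
      (Finset.range j : Set ℕ).pi fun i => if hi : i < j then {w ⟨i, hi⟩} else univ := by
    ext ω
    simp only [mem_ofPred_eq, Fin.forall_iff, Finset.coe_range, Set.mem_pi, mem_Iio]
    exact forall₂_congr fun i hi => by simp [hi]
  rw [hcyl, addressMeasure,
    Measure.infinitePi_pi _ fun i _ => by split_ifs; exacts [measurableSet_singleton _, .univ],
    Finset.prod_congr rfl fun i hi => by
      rw [dif_pos (Finset.mem_range.1 hi), uniformOn_univ, Measure.count_singleton]]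
  simp [ENNReal.inv_pow]

noncomputable def salemMeasure (N : ℕ) (a : Fin N → ℝ) (ηs : ℕ → ℝ) : Measure ℝ :=
  (addressMeasure N).map (coding a ηs)

instance [NeZero N] : IsFiniteMeasure (salemMeasure N a ηs) := by
  unfold salemMeasure addressMeasure
  infer_instance

lemma inv_natCast_pow_eq_ofReal {β : ℝ} (hη : 0 < η) (hNηβ : (N : ℝ) * η ^ β = 1) (m : ℕ) :
    ((N : ℝ≥0∞) ^ m)⁻¹ = ENNReal.ofReal ((η ^ m) ^ β) := by
  have hN : (N : ℝ)⁻¹ = η ^ β := inv_eq_of_mul_eq_one_right hNηβ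
  have hNpos : (0 : ℝ) < N := by
    by_contra! h0
    simp [le_antisymm h0 N.cast_nonneg] at hNηβ
  rw [← ENNReal.ofReal_natCast, ← ENNReal.ofReal_pow N.cast_nonneg,
    ← ENNReal.ofReal_inv_of_pos (by positivity), ← inv_pow, hN, Real.rpow_pow_comm hη.le]

namespace IsSalemData

lemma salemMeasure_compl_salemSet (h : IsSalemData N a ηs η) :
    salemMeasure N a ηs (salemSet N a ηs)ᶜ = 0 := by
  rw [salemMeasure, Measure.map_apply h.continuous_coding.measurable
    isClosed_salemSet.measurableSet.compl]
  convert measure_empty (μ := addressMeasure N)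
  exact eq_empty_iff_forall_notMem.2 fun ω hω => hω (h.coding_mem_salemSet ω)

lemma inv_pow_le_salemMeasure_stageInterval [NeZero N] (h : IsSalemData N a ηs η) {j : ℕ}
    (w : Fin j → Fin N) :
    ((N : ℝ≥0∞) ^ j)⁻¹ ≤ salemMeasure N a ηs (stageInterval a ηs w) := by
  rw [← addressMeasure_prefix w]
  refine (measure_mono fun ω hω => ?_).trans
    (Measure.le_map_apply h.continuous_coding.aemeasurable _)
  have hw : (fun i : Fin j => ω i) = w := funext hω
  simpa [hw] using h.coding_mem_stageInterval ω j

lemma ofReal_le_salemMeasure_ball [NeZero N] (h : IsSalemData N a ηs η) {β : ℝ} (hβ : 0 ≤ β)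
    (hNηβ : (N : ℝ) * η ^ β = 1) {t : ℝ} (ht : t ∈ salemSet N a ηs) {ρ : ℝ} (hρ0 : 0 < ρ)
    (hρ1 : ρ ≤ 1) :
    ENNReal.ofReal (η ^ β * ρ ^ β) ≤ salemMeasure N a ηs (ball t ρ) := by
  obtain ⟨j, hjρ, hρj⟩ := exists_ratioProd_succ_lt_le h.ratio_pos h.ratio_le h.lt_one hρ0 hρ1
  obtain ⟨w, hw⟩ := mem_salemStage_iff.1 (mem_iInter.1 ht (j + 1))
  have hsub : stageInterval a ηs w ⊆ ball t ρ := fun x hx => by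
    rw [stageInterval, mem_Icc] at hx hw
    rw [mem_ball, Real.dist_eq, abs_lt]
    constructor <;> linarith
  have hpow : η * ρ ≤ η ^ (j + 1) := by
    rw [pow_succ']
    exact mul_le_mul_of_nonneg_left (hρj.trans (ratioProd_le_pow h.ratio_pos h.ratio_le j))
      h.pos.le
  calc ENNReal.ofReal (η ^ β * ρ ^ β) = ENNReal.ofReal ((η * ρ) ^ β) := by
        rw [Real.mul_rpow h.pos.le hρ0.le]
    _ ≤ ENNReal.ofReal ((η ^ (j + 1)) ^ β) :=
        ENNReal.ofReal_le_ofReal (Real.rpow_le_rpow (mul_pos h.pos hρ0).le hpow hβ)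
    _ = ((N : ℝ≥0∞) ^ (j + 1))⁻¹ := (inv_natCast_pow_eq_ofReal h.pos hNηβ _).symm
    _ ≤ salemMeasure N a ηs (stageInterval a ηs w) := h.inv_pow_le_salemMeasure_stageInterval w
    _ ≤ salemMeasure N a ηs (ball t ρ) := measure_mono hsub

lemma card_le_of_forall_stageInterval_inter_closedBall (h : IsSalemData N a ηs η) (t : ℝ)
    {ρ : ℝ} (hρ : 0 ≤ ρ) {j : ℕ} (hρj : ρ ≤ ratioProd ηs j) (S : Finset (Fin (j + 1) → Fin N))
    (hS : ∀ w ∈ S, (stageInterval a ηs w ∩ closedBall t ρ).Nonempty) :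
    (S.card : ℝ) ≤ 3 / η + 1 := by
  have hPj := h.ratioProd_pos j
  have hPj1 := h.ratioProd_pos (j + 1)
  have hPj1j := ratioProd_succ_le h.ratio_pos h.ratio_le j
  have hcard := card_le_div_add_one_of_separated S (leftEnd a ηs) (mul_pos h.pos hPj)
    (A := t - ρ - ratioProd ηs (j + 1)) (B := t + ρ) (by linarith)
    (fun w hw => by
      obtain ⟨x, hxJ, hxB⟩ := hS w hw
      rw [stageInterval, mem_Icc] at hxJ
      rw [mem_closedBall, Real.dist_eq, abs_le] at hxB
      constructor <;> linarith)
    fun w _ w' _ hne => h.le_abs_leftEnd_sub hne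
  have hlen : 2 * ρ + ratioProd ηs (j + 1) ≤ 3 * ratioProd ηs j := by nlinarith [h.lt_one]
  have hratio : (t + ρ - (t - ρ - ratioProd ηs (j + 1))) / (η * ratioProd ηs j) ≤ 3 / η := by
    rw [div_le_div_iff₀ (mul_pos h.pos hPj) h.pos]
    nlinarith [h.pos]
  linarith

lemma salemMeasure_closedBall_le [NeZero N] (h : IsSalemData N a ηs η) (t : ℝ) {ρ : ℝ}
    (hρ : 0 ≤ ρ) {j : ℕ} (hρj : ρ ≤ ratioProd ηs j) :
    salemMeasure N a ηs (closedBall t ρ) ≤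
      ENNReal.ofReal (3 / η + 1) * ((N : ℝ≥0∞) ^ (j + 1))⁻¹ := by
  classical
  set S := Finset.univ.filter fun w : Fin (j + 1) → Fin N =>
    (stageInterval a ηs w ∩ closedBall t ρ).Nonempty
  have hcover : coding a ηs ⁻¹' closedBall t ρ ⊆ ⋃ w ∈ S, {ω | ∀ i : Fin (j + 1), ω i = w i} :=
    fun ω hω => mem_iUnion₂.2 ⟨fun i => ω i,
      by simpa [S] using ⟨_, h.coding_mem_stageInterval ω (j + 1), hω⟩, fun _ => rfl⟩
  have hcard := h.card_le_of_forall_stageInterval_inter_closedBall t hρ hρj S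
    fun w hw => (Finset.mem_filter.1 hw).2
  calc salemMeasure N a ηs (closedBall t ρ) = addressMeasure N (coding a ηs ⁻¹' closedBall t ρ) :=
        Measure.map_apply h.continuous_coding.measurable isClosed_closedBall.measurableSet
    _ ≤ ∑ w ∈ S, addressMeasure N {ω | ∀ i : Fin (j + 1), ω i = w i} :=
        (measure_mono hcover).trans (measure_biUnion_finset_le _ _)
    _ = (S.card : ℝ≥0∞) * ((N : ℝ≥0∞) ^ (j + 1))⁻¹ := by
        simp [addressMeasure_prefix, Finset.sum_const, nsmul_eq_mul]
    _ ≤ ENNReal.ofReal (3 / η + 1) * ((N : ℝ≥0∞) ^ (j + 1))⁻¹ := by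
        gcongr
        rw [← ENNReal.ofReal_natCast]
        exact ENNReal.ofReal_le_ofReal hcard

lemma salemMeasure_closedBall_le_ofReal [NeZero N] (h : IsSalemData N a ηs η) {β : ℝ}
    (hβ : 0 ≤ β) (hNηβ : (N : ℝ) * η ^ β = 1)
    (hlb : ∀ j : ℕ, η * (1 - 1 / ((j : ℝ) + 1) ^ 2) ≤ ηs j) (t : ℝ) {ρ : ℝ} (hρ0 : 0 < ρ)
    (hρ1 : ρ ≤ 1) :
    salemMeasure N a ηs (closedBall t ρ) ≤ ENNReal.ofReal ((3 / η + 1) * 2 ^ β * ρ ^ β) := by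
  obtain ⟨j, hjρ, hρj⟩ := exists_ratioProd_succ_lt_le h.ratio_pos h.ratio_le h.lt_one hρ0 hρ1
  have hpow : η ^ (j + 1) ≤ 2 * ρ := by
    linarith [pow_div_two_le_ratioProd h.pos hlb (j + 1)]
  have hC : 0 ≤ 3 / η + 1 := by positivity [h.pos]
  refine (h.salemMeasure_closedBall_le t hρ0.le hρj).trans ?_
  rw [inv_natCast_pow_eq_ofReal h.pos hNηβ, ← ENNReal.ofReal_mul hC, mul_assoc,
    ← Real.mul_rpow zero_le_two hρ0.le]
  exact ENNReal.ofReal_le_ofReal (mul_le_mul_of_nonneg_left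
    (Real.rpow_le_rpow (pow_nonneg h.pos.le _) hpow hβ) hC)

end IsSalemData

end SalemSet


open SalemSet

theorem salemCube_hausdorff_lower_regular_general
    (n N : ℕ) (hn : 0 < n) (hN : 2 ≤ N) (β η : ℝ) (hβ0 : 0 < β)
    (hNη : (N : ℝ) * η < 1) (hNηβ : (N : ℝ) * η ^ β = 1)
    (a : Fin N → ℝ) (ha0 : ∀ k, 0 ≤ a k) (ha1 : ∀ k, a k ≤ 1 - η)
    (hsep : ∀ k l, k ≠ l → η < |a k - a l|)
    (ηs : ℕ → ℝ) (hηpos : ∀ j, 0 < ηs j)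
    (hηlb : ∀ j : ℕ, η * (1 - 1 / ((j : ℝ) + 1) ^ 2) ≤ ηs j) (hηub : ∀ j, ηs j ≤ η)
    :
    ∃ c : ℝ, 0 < c ∧ ∀ x ∈ salemCube n N a ηs, ∀ r : ℝ, 0 < r → r < 1 →
      ENNReal.ofReal (c * r ^ ((n : ℝ) * β)) ≤
        μH[(n : ℝ) * β] (salemCube n N a ηs ∩ Metric.ball x r) := by
  have : NeZero N := ⟨by omega⟩
  have : Nonempty (Fin n) := ⟨⟨0, hn⟩⟩
  have hN2 : (2 : ℝ) ≤ N := by exact_mod_cast hN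
  have hS : IsSalemData N a ηs η :=
    ⟨hηpos, hηub, by nlinarith [hηpos 0, hηub 0], ha0, ha1, hsep⟩
  have hη := hS.pos
  obtain ⟨c, hc, hreg⟩ := exists_ofReal_mul_rpow_le_hausdorffMeasure_inter_ball (ι := Fin n)
    (by positivity : 0 < η ^ β) (by positivity : 0 < (3 / η + 1) * 2 ^ β) hβ0.le
    hS.salemMeasure_compl_salemSet
    (fun t ht ρ hρ0 hρ1 => hS.ofReal_le_salemMeasure_ball hβ0.le hNηβ ht hρ0 hρ1)
    (fun t ρ hρ0 hρ1 => hS.salemMeasure_closedBall_le_ofReal hβ0.le hNηβ hηlb t hρ0 hρ1)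
  exact ⟨c, hc, fun x hx r hr0 hr1 => by simpa [salemCube] using hreg x hx r hr0 hr1.le⟩

theorem salemCube_hausdorff_lower_regular
    (n N : ℕ) (hn : 0 < n) (hN : 2 ≤ N) (β η : ℝ) (hβ0 : 0 < β) (hβ1 : β < 1)
    (hη0 : 0 < η) (hNη : (N : ℝ) * η < 1) (hNηβ : (N : ℝ) * η ^ β = 1)
    (a : Fin N → ℝ) (ha0 : ∀ k, 0 ≤ a k) (ha1 : ∀ k, a k ≤ 1 - η)
    (hmono : StrictMono a) (hsep : ∀ k l, k ≠ l → η < |a k - a l|)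
    (ηs : ℕ → ℝ) (hηpos : ∀ j, 0 < ηs j) (hηmono : Monotone ηs)
    (hηlb : ∀ j : ℕ, η * (1 - 1 / ((j : ℝ) + 1) ^ 2) ≤ ηs j) (hηub : ∀ j, ηs j ≤ η)
    :
    ∃ c : ℝ, 0 < c ∧ ∀ x ∈ salemCube n N a ηs, ∀ r : ℝ, 0 < r → r < 1 →
      ENNReal.ofReal (c * r ^ ((n : ℝ) * β)) ≤
        μH[(n : ℝ) * β] (salemCube n N a ηs ∩ Metric.ball x r) :=
  salemCube_hausdorff_lower_regular_general n N hn hN β η hβ0 hNη hNηβ a ha0 ha1 hsep ηs hηpos hηlb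
    hηub
end
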